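/- For every k ≥ 1 and every m ≥ 2, the sub-Laplacian restricts to a surjective ℝ-linear map Δ_{H_k} : P_m(ℍ_k) → P_{m−2}(ℍ_k); consequently dim H_m(ℍ_k) = dim P_m(ℍ_k) − dim P_{m−2}(ℍ_k). -/

import Mathlib

/-!
The Fischer pairing `⟨p, q⟩ = ∑_d d! p_d q_d` is positive definite and makes `∂ᵢ` adjoint to
multiplication by the `i`-th variable. Hence `Δ_{H_k}` has the adjoint
`Δ* = ∑ⱼ (X*ⱼ)² + (Y*ⱼ)²` with `X*ⱼ = xⱼ + 2t∂_{yⱼ}` and `Y*ⱼ = yⱼ − 2t∂_{xⱼ}`, which maps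
`P_{m-2}` into `P_m`. If `Δ Δ* q = 0` then `⟨Δ* q, Δ* q⟩ = ⟨Δ Δ* q, q⟩ = 0`, so `Δ* q = 0`.
Moreover `Δ*` is injective: it commutes with multiplication by `t` and agrees with multiplication
by `|x|² + |y|²` modulo `t`, so writing `q = tⁿ b` with `t ∤ b` gives `Δ* q = tⁿ Δ* b` with
`t ∤ Δ* b`. Thus `Δ Δ*` is injective, hence bijective, on the finite-dimensional `P_{m-2}`, so
`Δ : P_m → P_{m-2}` is onto and rank–nullity computes the dimension of its kernel `H_m`.
-/

open MvPolynomial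

noncomputable section

/-- The polynomial ring ℝ[x₁,…,x_k,y₁,…,y_k,t]: variable `j` is `x_{j+1}` for `j < k`,
variable `k + j` is `y_{j+1}` for `j < k`, and variable `2k` is `t`. -/
abbrev Rk (k : ℕ) := MvPolynomial (Fin (2 * k + 1)) ℝ

/-- Index of the variable x_j. -/
def xI (k : ℕ) (j : Fin k) : Fin (2 * k + 1) := ⟨(j : ℕ), by have := j.isLt; omega⟩

/-- Index of the variable y_j. -/
def yI (k : ℕ) (j : Fin k) : Fin (2 * k + 1) := ⟨k + (j : ℕ), by have := j.isLt; omega⟩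

/-- Index of the variable t. -/
def tI (k : ℕ) : Fin (2 * k + 1) := ⟨2 * k, by omega⟩

/-- Weights: 1 on each x_j, y_j and 2 on t. -/
def wk (k : ℕ) : Fin (2 * k + 1) → ℤ := fun i => if (i : ℕ) = 2 * k then 2 else 1

/-- The horizontal vector field X_j p = ∂_{x_j} p + 2 y_j ∂ₜ p. -/
def XopK (k : ℕ) (j : Fin k) : Rk k →ₗ[ℝ] Rk k :=
  (pderiv (xI k j)).toLinearMap +
    (LinearMap.mulLeft ℝ ((2 : Rk k) * X (yI k j))) ∘ₗ (pderiv (tI k)).toLinearMap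

/-- The horizontal vector field Y_j p = ∂_{y_j} p − 2 x_j ∂ₜ p. -/
def YopK (k : ℕ) (j : Fin k) : Rk k →ₗ[ℝ] Rk k :=
  (pderiv (yI k j)).toLinearMap -
    (LinearMap.mulLeft ℝ ((2 : Rk k) * X (xI k j))) ∘ₗ (pderiv (tI k)).toLinearMap

/-- The sub-Laplacian Δ_{H_k} = Σ_j (X_j² + Y_j²). -/
def ΔHk (k : ℕ) : Rk k →ₗ[ℝ] Rk k :=
  ∑ j : Fin k, (XopK k j ∘ₗ XopK k j + YopK k j ∘ₗ YopK k j)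

/-- P_m(ℍ_k): weighted homogeneous polynomials of degree m (ℤ-indexed, so zero for m < 0). -/
def PmK (k : ℕ) (m : ℤ) : Submodule ℝ (Rk k) := weightedHomogeneousSubmodule ℝ (wk k) m

/-- H_m(ℍ_k): weighted homogeneous Δ_{H_k}-harmonic polynomials of degree m. -/
def HmK (k : ℕ) (m : ℤ) : Submodule ℝ (Rk k) := PmK k m ⊓ LinearMap.ker (ΔHk k)

namespace Finsupp

variable {σ : Type*}

def prodFactorial (d : σ →₀ ℕ) : ℕ := d.prod fun _ n => n.factorial

theorem prodFactorial_pos (d : σ →₀ ℕ) : 0 < d.prodFactorial :=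
  Finset.prod_pos fun _ _ => Nat.factorial_pos _

theorem prodFactorial_add_single [DecidableEq σ] (d : σ →₀ ℕ) (i : σ) :
    (d + single i 1).prodFactorial = (d i + 1) * d.prodFactorial := by
  have hg : ∀ _ : σ, Nat.factorial 0 = 1 := fun _ => Nat.factorial_zero
  rw [prodFactorial, prodFactorial, ← mul_prod_erase' _ i _ hg, ← mul_prod_erase' d i _ hg,
    erase_add, erase_single, add_zero, add_apply, single_eq_same, Nat.factorial_succ, mul_assoc]

end Finsupp

namespace MvPolynomial

variable {σ R : Type*} [CommRing R]

theorem sum_support_coeff_mul_eq_of_subset (w : (σ →₀ ℕ) → R) (p : MvPolynomial σ R)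
    {q : MvPolynomial σ R} {s : Finset (σ →₀ ℕ)} (hs : q.support ⊆ s) :
    ∑ d ∈ q.support, coeff d p * coeff d q * w d = ∑ d ∈ s, coeff d p * coeff d q * w d :=
  Finset.sum_subset hs fun d _ hd => by rw [notMem_support_iff.mp hd, mul_zero, zero_mul]

variable (σ R) in
def fischerPairing : LinearMap.BilinForm R (MvPolynomial σ R) :=
  LinearMap.mk₂ R (fun p q => ∑ d ∈ q.support, coeff d p * coeff d q * d.prodFactorial)
    (fun p p' q => by simp only [coeff_add, add_mul, Finset.sum_add_distrib])
    (fun c p q => by simp only [coeff_smul, smul_eq_mul, Finset.mul_sum, mul_assoc])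
    (fun p q q' => by
      classical
      rw [sum_support_coeff_mul_eq_of_subset _ p (support_add (p := q) (q := q')),
        sum_support_coeff_mul_eq_of_subset _ p (Finset.subset_union_left (s₂ := q'.support)),
        sum_support_coeff_mul_eq_of_subset _ p (Finset.subset_union_right (s₁ := q.support)),
        ← Finset.sum_add_distrib]
      simp only [coeff_add, mul_add, add_mul])
    (fun c p q => by
      rw [sum_support_coeff_mul_eq_of_subset _ p (support_smul (a := c) (f := q)), smul_eq_mul,
        Finset.mul_sum]
      simp only [coeff_smul, smul_eq_mul]
      exact Finset.sum_congr rfl fun _ _ => by ring)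

theorem fischerPairing_apply_of_subset (p q : MvPolynomial σ R) {s : Finset (σ →₀ ℕ)}
    (hs : q.support ⊆ s) :
    fischerPairing σ R p q = ∑ d ∈ s, coeff d p * coeff d q * d.prodFactorial :=
  sum_support_coeff_mul_eq_of_subset _ p hs

theorem fischerPairing_isSymm : (fischerPairing σ R).IsSymm := by
  classical
  refine ⟨fun p q => ?_⟩
  rw [fischerPairing_apply_of_subset p q Finset.subset_union_right,
    fischerPairing_apply_of_subset q p (Finset.subset_union_left (s₂ := q.support))]
  exact Finset.sum_congr rfl fun _ _ => by ring

theorem fischerPairing_monomial_right (p : MvPolynomial σ R) (v : σ →₀ ℕ) (b : R) :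
    fischerPairing σ R p (monomial v b) = coeff v p * b * v.prodFactorial := by
  classical
  rw [fischerPairing_apply_of_subset p _ (support_monomial_subset (s := v) (a := b)),
    Finset.sum_singleton, coeff_monomial, if_pos rfl]

theorem fischerPairing_pderiv (i : σ) (p q : MvPolynomial σ R) :
    fischerPairing σ R (pderiv i p) q = fischerPairing σ R p (X i * q) := by
  classical
  induction q using MvPolynomial.induction_on' with
  | add q q' hq hq' => rw [map_add, mul_add, map_add, hq, hq']
  | monomial v b =>
    rw [X, monomial_mul, one_mul, add_comm, fischerPairing_monomial_right,
      fischerPairing_monomial_right, coeff_pderiv, Finsupp.prodFactorial_add_single]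
    push_cast
    ring

theorem fischerPairing_X_mul (i : σ) (p q : MvPolynomial σ R) :
    fischerPairing σ R (X i * p) q = fischerPairing σ R p (pderiv i q) := by
  rw [fischerPairing_isSymm.eq, fischerPairing_isSymm.eq p, fischerPairing_pderiv]

theorem fischerPairing_self_pos [LinearOrder R] [IsStrictOrderedRing R] {p : MvPolynomial σ R}
    (hp : p ≠ 0) : 0 < fischerPairing σ R p p :=
  Finset.sum_pos (fun d hd => mul_pos (mul_self_pos.mpr (mem_support_iff.mp hd))
    (Nat.cast_pos.mpr d.prodFactorial_pos)) (support_nonempty.mpr hp)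

theorem isAdjointPair_mulLeft_C_mul_X_comp_pderiv (c : R) (i j : σ) :
    LinearMap.IsAdjointPair (fischerPairing σ R) (fischerPairing σ R)
      (LinearMap.mulLeft R (C c * X i) ∘ₗ (pderiv j).toLinearMap)
      (LinearMap.mulLeft R (C c * X j) ∘ₗ (pderiv i).toLinearMap) := fun p q => by
  simp only [LinearMap.comp_apply, LinearMap.mulLeft_apply, Derivation.coeFn_coe, C_mul',
    smul_mul_assoc, map_smul, LinearMap.smul_apply, fischerPairing_X_mul, fischerPairing_pderiv]

theorem commute_pderiv_mulLeft {i : σ} {a : MvPolynomial σ R} (ha : pderiv i a = 0) :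
    Commute (pderiv i).toLinearMap (LinearMap.mulLeft R a) := by
  refine LinearMap.ext fun p => ?_
  simp [ha]

theorem injective_of_X_dvd_sub_mul {K : Type*} [Field K] {T : Module.End K (MvPolynomial σ K)}
    {i : σ} {a : MvPolynomial σ K} (hcomm : Commute T (LinearMap.mulLeft K (X i)))
    (hmod : ∀ q, X i ∣ T q - a * q) (ha : ¬ X i ∣ a) : Function.Injective T := by
  refine (injective_iff_map_eq_zero T).mpr fun q hq => by_contra fun hq0 => ?_
  obtain ⟨n, b, hb, rfl⟩ := WfDvdMonoid.max_power_factor hq0 (X_prime (i := i)).irreducible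
  have hTb : T b = 0 := by
    have := congrArg (· b) ((hcomm.pow_right n).eq)
    simp only [Module.End.mul_apply, LinearMap.pow_mulLeft, LinearMap.mulLeft_apply] at this
    rw [this] at hq
    exact (mul_eq_zero.mp hq).resolve_left (pow_ne_zero _ (X_ne_zero i))
  have : X i ∣ a * b := by simpa [hTb] using (hmod b).neg_right
  exact (X_prime.dvd_or_dvd this).elim ha hb

theorem finite_weightedHomogeneousSubmodule_of_pos [Finite σ] {w : σ → ℤ} (hw : ∀ i, 0 < w i)
    (m : ℤ) : Module.Finite R (weightedHomogeneousSubmodule R w m) := by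
  have hdeg : ∀ d : σ →₀ ℕ, (d.degree : ℤ) ≤ Finsupp.weight w d := fun d => by
    rw [Finsupp.degree_apply, Finsupp.weight_apply, Finsupp.sum, Nat.cast_sum]
    exact Finset.sum_le_sum fun i _ => by
      rw [nsmul_eq_mul]; exact le_mul_of_one_le_right (Nat.cast_nonneg _) (hw i)
  have hfin : {d : σ →₀ ℕ | Finsupp.weight w d = m}.Finite :=
    (Finsupp.finite_of_degree_le m.toNat).subset fun d (hd : _ = m) => by
      have := hdeg d; simp only [Set.mem_ofPred_eq]; omega
  have := hfin.to_subtype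
  rw [weightedHomogeneousSubmodule_eq_finsupp_supported]
  exact Module.Finite.of_basis (basisRestrictSupport R _)

end MvPolynomial

namespace LinearMap

variable {K E : Type*} [Field K] [AddCommGroup E] [Module K E]

theorem commute_mulLeft_mulLeft {R A : Type*} [CommSemiring R] [CommSemiring A] [Algebra R A]
    (a b : A) : Commute (mulLeft R a) (mulLeft R b) :=
  ext fun _ => mul_left_comm a b _

theorem isAdjointPair_sum {R M : Type*} [CommSemiring R] [AddCommMonoid M] [Module R M]
    {B : LinearMap.BilinForm R M} {ι : Type*} (s : Finset ι) {f g : ι → Module.End R M}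
    (h : ∀ i ∈ s, IsAdjointPair B B (f i) (g i)) :
    IsAdjointPair B B ⇑(∑ i ∈ s, f i) ⇑(∑ i ∈ s, g i) := fun x y => by
  simp only [map_sum, sum_apply]
  exact Finset.sum_congr rfl fun i hi => h i hi x y

theorem IsAdjointPair.surjOn_of_injective {B : LinearMap.BilinForm K E}
    (hB : ∀ x, B x x = 0 → x = 0) {f g : Module.End K E} (hfg : IsAdjointPair B B f g)
    (hg : Function.Injective g) {P Q : Submodule K E} [FiniteDimensional K Q]
    (hf : Set.MapsTo f P Q) (hgQ : Set.MapsTo g Q P) :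
    Set.SurjOn f P Q := by
  let fg : Module.End K Q := (f ∘ₗ g).restrict fun q hq => hf (hgQ hq)
  have hinj : Function.Injective fg := by
    refine (injective_iff_map_eq_zero fg).mpr fun a ha => ?_
    have hfga : f (g a) = 0 := congrArg Subtype.val ha
    have : B (g a) (g a) = 0 := by rw [← hfg, hfga, map_zero, zero_apply]
    exact Subtype.ext ((injective_iff_map_eq_zero g).mp hg _ (hB _ this))
  intro q hq
  obtain ⟨a, ha⟩ := injective_iff_surjective.mp hinj ⟨q, hq⟩
  exact ⟨g a, hgQ a.2, congrArg Subtype.val ha⟩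

theorem finrank_inf_ker_add_finrank_of_surjOn {f : E →ₗ[K] E} {P Q : Submodule K E}
    [FiniteDimensional K P] (hf : Set.MapsTo f P Q) (hsurj : Set.SurjOn f P Q) :
    Module.finrank K ↥(P ⊓ ker f) + Module.finrank K Q = Module.finrank K P := by
  have hrange : range (f.restrict fun _ hx => hf hx) = ⊤ := by
    refine range_eq_top.mpr fun q => ?_
    obtain ⟨p, hp, hpq⟩ := hsurj q.2
    exact ⟨⟨p, hp⟩, Subtype.ext hpq⟩
  rw [← finrank_range_add_finrank_ker (f.restrict fun _ hx => hf hx), hrange, finrank_top, add_comm,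
    ker_restrict, ← Submodule.map_comap_subtype, Submodule.finrank_map_subtype_eq]

end LinearMap

section Heisenberg

open LinearMap

variable {k : ℕ}

theorem xI_ne_tI (j : Fin k) : xI k j ≠ tI k := by
  simp only [xI, tI, ne_eq, Fin.ext_iff]; omega

theorem yI_ne_tI (j : Fin k) : yI k j ≠ tI k := by
  simp only [yI, tI, ne_eq, Fin.ext_iff]; omega

theorem wk_xI (j : Fin k) : wk k (xI k j) = 1 := if_neg (by simp only [xI]; omega)

theorem wk_yI (j : Fin k) : wk k (yI k j) = 1 := if_neg (by simp only [yI]; omega)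

theorem wk_tI : wk k (tI k) = 2 := if_pos rfl

instance (m : ℤ) : FiniteDimensional ℝ (PmK k m) :=
  finite_weightedHomogeneousSubmodule_of_pos (fun i => by unfold wk; split_ifs <;> norm_num) m

def XopKAdj (k : ℕ) (j : Fin k) : Rk k →ₗ[ℝ] Rk k :=
  LinearMap.mulLeft ℝ (X (xI k j)) +
    LinearMap.mulLeft ℝ ((2 : Rk k) * X (tI k)) ∘ₗ (pderiv (yI k j)).toLinearMap

def YopKAdj (k : ℕ) (j : Fin k) : Rk k →ₗ[ℝ] Rk k :=
  LinearMap.mulLeft ℝ (X (yI k j)) -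
    LinearMap.mulLeft ℝ ((2 : Rk k) * X (tI k)) ∘ₗ (pderiv (xI k j)).toLinearMap

def ΔHkAdj (k : ℕ) : Rk k →ₗ[ℝ] Rk k :=
  ∑ j : Fin k, (XopKAdj k j ∘ₗ XopKAdj k j + YopKAdj k j ∘ₗ YopKAdj k j)

def horizNormSq (k : ℕ) : Rk k := ∑ j : Fin k, (X (xI k j) ^ 2 + X (yI k j) ^ 2)

theorem isAdjointPair_XopK (j : Fin k) :
    IsAdjointPair (fischerPairing _ ℝ) (fischerPairing _ ℝ) (XopK k j) (XopKAdj k j) := by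
  rw [XopK, XopKAdj, ← map_ofNat C 2]
  exact IsAdjointPair.add (fischerPairing_pderiv _)
    (isAdjointPair_mulLeft_C_mul_X_comp_pderiv 2 _ _)

theorem isAdjointPair_YopK (j : Fin k) :
    IsAdjointPair (fischerPairing _ ℝ) (fischerPairing _ ℝ) (YopK k j) (YopKAdj k j) := by
  rw [YopK, YopKAdj, ← map_ofNat C 2]
  exact IsAdjointPair.sub (fischerPairing_pderiv _)
    (isAdjointPair_mulLeft_C_mul_X_comp_pderiv 2 _ _)

theorem isAdjointPair_ΔHk :
    IsAdjointPair (fischerPairing _ ℝ) (fischerPairing _ ℝ) (ΔHk k) (ΔHkAdj k) :=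
  isAdjointPair_sum _ fun j _ => ((isAdjointPair_XopK j).comp (isAdjointPair_XopK j)).add
    ((isAdjointPair_YopK j).comp (isAdjointPair_YopK j))

theorem isWeightedHomogeneous_two_mul_X_mul {p : Rk k} {n n' : ℤ}
    (hp : IsWeightedHomogeneous (wk k) p n) {i : Fin (2 * k + 1)} (h : wk k i + n = n') :
    IsWeightedHomogeneous (wk k) ((2 : Rk k) * X i * p) n' := by
  rw [← map_ofNat C 2, ← h, ← zero_add (wk k i)]
  exact ((isWeightedHomogeneous_C (wk k) 2).mul (isWeightedHomogeneous_X ℝ (wk k) i)).mul hp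

theorem XopK_mem_PmK (j : Fin k) {p : Rk k} {m : ℤ} (hp : p ∈ PmK k m) :
    XopK k j p ∈ PmK k (m - 1) := by
  rw [PmK, mem_weightedHomogeneousSubmodule] at hp ⊢
  have h₁ : IsWeightedHomogeneous (wk k) (pderiv (xI k j) p) (m - 1) :=
    hp.pderiv (by rw [wk_xI]; ring)
  have h₂ : IsWeightedHomogeneous (wk k) (2 * X (yI k j) * pderiv (tI k) p) (m - 1) :=
    isWeightedHomogeneous_two_mul_X_mul (hp.pderiv (n' := m - 2) (by rw [wk_tI]; ring))
      (by rw [wk_yI]; ring)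
  exact h₁.add h₂

theorem YopK_mem_PmK (j : Fin k) {p : Rk k} {m : ℤ} (hp : p ∈ PmK k m) :
    YopK k j p ∈ PmK k (m - 1) := by
  rw [PmK, mem_weightedHomogeneousSubmodule] at hp ⊢
  have h₁ : IsWeightedHomogeneous (wk k) (pderiv (yI k j) p) (m - 1) :=
    hp.pderiv (by rw [wk_yI]; ring)
  have h₂ : IsWeightedHomogeneous (wk k) (2 * X (xI k j) * pderiv (tI k) p) (m - 1) :=
    isWeightedHomogeneous_two_mul_X_mul (hp.pderiv (n' := m - 2) (by rw [wk_tI]; ring))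
      (by rw [wk_xI]; ring)
  exact h₁.sub h₂

theorem XopKAdj_mem_PmK (j : Fin k) {q : Rk k} {n : ℤ} (hq : q ∈ PmK k n) :
    XopKAdj k j q ∈ PmK k (n + 1) := by
  rw [PmK, mem_weightedHomogeneousSubmodule] at hq ⊢
  have h₁ : IsWeightedHomogeneous (wk k) (X (xI k j) * q) (n + 1) := by
    simpa [wk_xI, add_comm] using (isWeightedHomogeneous_X ℝ (wk k) (xI k j)).mul hq
  have h₂ : IsWeightedHomogeneous (wk k) (2 * X (tI k) * pderiv (yI k j) q) (n + 1) :=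
    isWeightedHomogeneous_two_mul_X_mul (hq.pderiv (n' := n - 1) (by rw [wk_yI]; ring))
      (by rw [wk_tI]; ring)
  exact h₁.add h₂

theorem YopKAdj_mem_PmK (j : Fin k) {q : Rk k} {n : ℤ} (hq : q ∈ PmK k n) :
    YopKAdj k j q ∈ PmK k (n + 1) := by
  rw [PmK, mem_weightedHomogeneousSubmodule] at hq ⊢
  have h₁ : IsWeightedHomogeneous (wk k) (X (yI k j) * q) (n + 1) := by
    simpa [wk_yI, add_comm] using (isWeightedHomogeneous_X ℝ (wk k) (yI k j)).mul hq
  have h₂ : IsWeightedHomogeneous (wk k) (2 * X (tI k) * pderiv (xI k j) q) (n + 1) :=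
    isWeightedHomogeneous_two_mul_X_mul (hq.pderiv (n' := n - 1) (by rw [wk_xI]; ring))
      (by rw [wk_tI]; ring)
  exact h₁.sub h₂

theorem ΔHk_mem_PmK {p : Rk k} {m : ℤ} (hp : p ∈ PmK k m) : ΔHk k p ∈ PmK k (m - 2) := by
  rw [ΔHk, LinearMap.sum_apply]
  refine Submodule.sum_mem _ fun j _ => Submodule.add_mem _ ?_ ?_
  · simpa [sub_sub, one_add_one_eq_two] using XopK_mem_PmK j (XopK_mem_PmK j hp)
  · simpa [sub_sub, one_add_one_eq_two] using YopK_mem_PmK j (YopK_mem_PmK j hp)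

theorem ΔHkAdj_mem_PmK {q : Rk k} {n : ℤ} (hq : q ∈ PmK k n) : ΔHkAdj k q ∈ PmK k (n + 2) := by
  rw [ΔHkAdj, LinearMap.sum_apply]
  refine Submodule.sum_mem _ fun j _ => Submodule.add_mem _ ?_ ?_
  · simpa [add_assoc, one_add_one_eq_two] using XopKAdj_mem_PmK j (XopKAdj_mem_PmK j hq)
  · simpa [add_assoc, one_add_one_eq_two] using YopKAdj_mem_PmK j (YopKAdj_mem_PmK j hq)

theorem commute_XopKAdj_mulLeft_X_tI (j : Fin k) :
    Commute (XopKAdj k j) (LinearMap.mulLeft ℝ (X (tI k))) :=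
  (commute_mulLeft_mulLeft _ _).add_left ((commute_mulLeft_mulLeft _ _).mul_left
    (commute_pderiv_mulLeft (pderiv_X_of_ne (yI_ne_tI j).symm)))

theorem commute_YopKAdj_mulLeft_X_tI (j : Fin k) :
    Commute (YopKAdj k j) (LinearMap.mulLeft ℝ (X (tI k))) :=
  (commute_mulLeft_mulLeft _ _).sub_left ((commute_mulLeft_mulLeft _ _).mul_left
    (commute_pderiv_mulLeft (pderiv_X_of_ne (xI_ne_tI j).symm)))

theorem commute_ΔHkAdj_mulLeft_X_tI : Commute (ΔHkAdj k) (LinearMap.mulLeft ℝ (X (tI k))) :=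
  Commute.sum_left _ _ _ fun j _ =>
    ((commute_XopKAdj_mulLeft_X_tI j).mul_left (commute_XopKAdj_mulLeft_X_tI j)).add_left
      ((commute_YopKAdj_mulLeft_X_tI j).mul_left (commute_YopKAdj_mulLeft_X_tI j))

theorem X_tI_dvd_ΔHkAdj_sub_mul (q : Rk k) : X (tI k) ∣ ΔHkAdj k q - horizNormSq k * q := by
  rw [← Ideal.mem_span_singleton, ← Ideal.Quotient.eq]
  set π := Ideal.Quotient.mk (Ideal.span {(X (tI k) : Rk k)})
  have ht : π (X (tI k)) = 0 := Ideal.Quotient.mk_singleton_self _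
  have hX : ∀ j r, π (XopKAdj k j r) = π (X (xI k j)) * π r := fun j r => by
    simp [XopKAdj, ht]
  have hY : ∀ j r, π (YopKAdj k j r) = π (X (yI k j)) * π r := fun j r => by
    simp [YopKAdj, ht]
  simp only [ΔHkAdj, horizNormSq, LinearMap.sum_apply, LinearMap.add_apply, LinearMap.comp_apply,
    map_sum, map_add, map_mul, map_pow, hX, hY, Finset.sum_mul]
  exact Finset.sum_congr rfl fun _ _ => by ring

theorem not_X_tI_dvd_horizNormSq (hk : 1 ≤ k) : ¬ X (tI k) ∣ horizNormSq k := by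
  rintro ⟨r, hr⟩
  have := congrArg (eval fun i => if i = tI k then (0 : ℝ) else 1) hr
  simp [horizNormSq, xI_ne_tI, yI_ne_tI, Nat.one_le_iff_ne_zero.mp hk] at this

theorem ΔHkAdj_injective (hk : 1 ≤ k) : Function.Injective (ΔHkAdj k) :=
  injective_of_X_dvd_sub_mul commute_ΔHkAdj_mulLeft_X_tI X_tI_dvd_ΔHkAdj_sub_mul
    (not_X_tI_dvd_horizNormSq hk)

end Heisenberg

theorem stmt5_general (k : ℕ) (hk : 1 ≤ k) (m : ℕ) :
    (∀ p ∈ PmK k (m : ℤ), ΔHk k p ∈ PmK k ((m : ℤ) - 2)) ∧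
    (∀ q ∈ PmK k ((m : ℤ) - 2), ∃ p ∈ PmK k (m : ℤ), ΔHk k p = q) ∧
    Module.finrank ℝ (HmK k (m : ℤ)) =
      Module.finrank ℝ (PmK k (m : ℤ)) - Module.finrank ℝ (PmK k ((m : ℤ) - 2)) := by
  have hmaps : Set.MapsTo (ΔHk k) (PmK k m) (PmK k (m - 2)) := fun _ => ΔHk_mem_PmK
  have hsurj : Set.SurjOn (ΔHk k) (PmK k m) (PmK k (m - 2)) :=
    isAdjointPair_ΔHk.surjOn_of_injective
      (fun p hp => by_contra fun h => (fischerPairing_self_pos h).ne' hp)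
      (ΔHkAdj_injective hk) hmaps fun q hq => by simpa using ΔHkAdj_mem_PmK hq
  refine ⟨fun _ hp => hmaps hp, fun _ hq => hsurj hq, ?_⟩
  rw [HmK, ← LinearMap.finrank_inf_ker_add_finrank_of_surjOn hmaps hsurj, Nat.add_sub_cancel]

/-- for `m ≥ 2`, `Δ_{H_k}` maps `P_m(ℍ_k)` into `P_{m−2}(ℍ_k)` and the
restricted map is surjective; consequently
`dim H_m(ℍ_k) = dim P_m(ℍ_k) − dim P_{m−2}(ℍ_k)`. -/
theorem stmt5 (k : ℕ) (hk : 1 ≤ k) (m : ℕ) (hm : 2 ≤ m) :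
    (∀ p ∈ PmK k (m : ℤ), ΔHk k p ∈ PmK k ((m : ℤ) - 2)) ∧
    (∀ q ∈ PmK k ((m : ℤ) - 2), ∃ p ∈ PmK k (m : ℤ), ΔHk k p = q) ∧
    Module.finrank ℝ (HmK k (m : ℤ)) =
      Module.finrank ℝ (PmK k (m : ℤ)) - Module.finrank ℝ (PmK k ((m : ℤ) - 2)) :=
  stmt5_general k hk m

end
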